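/- arXiv:1908.02109 — 6 statements merged into one kernel-verified Lean document; each statement's English description precedes it below -/
import Mathlib

section
/- Let M be a matroid and let B₁, B₂ be bases of M at distance two in the basis graph, say B₂ = (B₁ \ {e₁, e₂}) ∪ {f₁, f₂} where e₁ ≠ e₂ are elements of B₁ \ B₂ and f₁ ≠ f₂ are elements of B₂ \ B₁. Then B₁ and B₂ have at least two common neighbors in the basis graph, obtained by pivoting e₁ out of one and e₂ out of the other, and pivoting f₁ into one and f₂ into the other; precisely, either both (B₁ \ {e₁}) ∪ {f₁} and (B₁ \ {e₂}) ∪ {f₂} are bases of M, or both (B₁ \ {e₁}) ∪ {f₂} and (B₁ \ {e₂}) ∪ {f₁} are bases of M. -/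
open Set

theorem Set.insert_diff_singleton_eq_of_eq_diff_pair_union_pair {α : Type*} {B B' : Set α}
    {e e' f f' : α} (hB' : B' = B \ {e, e'} ∪ {f, f'}) (he : e ≠ e') (hf : f ≠ f')
    (heB : e ∈ B) (hfB : f ∉ B) :
    insert e (B' \ {f}) = insert f' (B \ {e'}) := by
  subst hB'
  ext x
  simp only [mem_insert_iff, mem_sdiff, mem_union, mem_singleton_iff]
  grind

namespace Matroid

variable {α : Type*} {M : Matroid α} {B₁ B₂ : Set α} {e e' f f' : α}

theorem IsBase.isBase_insert_diff_or_of_diff_subset_pair (hB₁ : M.IsBase B₁)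
    (hB₂ : M.IsBase B₂) (he : e ∈ B₁ \ B₂) (h : B₂ \ B₁ ⊆ {f, f'}) :
    M.IsBase (insert f (B₁ \ {e})) ∨ M.IsBase (insert f' (B₁ \ {e})) := by
  obtain ⟨g, hg, hgB⟩ := hB₁.exchange hB₂ he
  obtain rfl | rfl := h hg
  · exact .inl hgB
  · exact .inr hgB

theorem IsBase.isBase_insert_diff_or_of_eq_diff_pair_union_pair (hB₁ : M.IsBase B₁)
    (hB₂ : M.IsBase B₂) (hB : B₂ = B₁ \ {e, e'} ∪ {f, f'}) (he : e ≠ e') (hf : f ≠ f')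
    (heB : e ∈ B₁) (he'B : e' ∈ B₁) (hfB : f ∉ B₁) :
    M.IsBase (insert f' (B₁ \ {e'})) ∨ M.IsBase (insert f' (B₁ \ {e})) := by
  have hB₁B₂ : B₁ \ B₂ ⊆ {e, e'} := sdiff_subset_comm.1 (hB ▸ subset_union_left)
  have hfB₂ : f ∈ B₂ \ B₁ := ⟨hB ▸ .inr (.inl rfl), hfB⟩
  have h := hB₂.isBase_insert_diff_or_of_diff_subset_pair hB₁ hfB₂ hB₁B₂
  rwa [insert_diff_singleton_eq_of_eq_diff_pair_union_pair hB he hf heB hfB,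
    insert_diff_singleton_eq_of_eq_diff_pair_union_pair (by rw [hB, pair_comm e]) he.symm hf he'B
      hfB] at h

end Matroid

/-- Let `M` be a matroid and let `B₁, B₂` be bases of `M` at distance two
in the basis graph, say `B₂ = (B₁ \ {e₁, e₂}) ∪ {f₁, f₂}` where `e₁ ≠ e₂` are elements of
`B₁ \ B₂` and `f₁ ≠ f₂` are elements of `B₂ \ B₁`.  Then `B₁` and `B₂` have at least two
common neighbors in the basis graph, obtained by pivoting `e₁` out of one and `e₂` out of
the other, and pivoting `f₁` into one and `f₂` into the other: either both
`(B₁ \ {e₁}) ∪ {f₁}` and `(B₁ \ {e₂}) ∪ {f₂}` are bases of `M`, or both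
`(B₁ \ {e₁}) ∪ {f₂}` and `(B₁ \ {e₂}) ∪ {f₁}` are bases of `M`. -/
theorem common_neighbors_of_dist_two {α : Type*} (M : Matroid α) (B₁ B₂ : Set α)
    (hB₁ : M.IsBase B₁) (hB₂ : M.IsBase B₂) (e₁ e₂ f₁ f₂ : α)
    (he : e₁ ≠ e₂) (hf : f₁ ≠ f₂)
    (he₁ : e₁ ∈ B₁ \ B₂) (he₂ : e₂ ∈ B₁ \ B₂)
    (hf₁ : f₁ ∈ B₂ \ B₁) (hf₂ : f₂ ∈ B₂ \ B₁)
    (hB : B₂ = (B₁ \ {e₁, e₂}) ∪ {f₁, f₂}) :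
    (M.IsBase (insert f₁ (B₁ \ {e₁})) ∧ M.IsBase (insert f₂ (B₁ \ {e₂}))) ∨
    (M.IsBase (insert f₂ (B₁ \ {e₁})) ∧ M.IsBase (insert f₁ (B₁ \ {e₂}))) := by
  have hB₂B₁ : B₂ \ B₁ ⊆ {f₁, f₂} :=
    sdiff_subset_iff.2 (hB ▸ union_subset_union_left _ sdiff_subset)
  have row₁ := hB₁.isBase_insert_diff_or_of_diff_subset_pair hB₂ he₁ hB₂B₁
  have row₂ := hB₁.isBase_insert_diff_or_of_diff_subset_pair hB₂ he₂ hB₂B₁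
  have col₁ := hB₁.isBase_insert_diff_or_of_eq_diff_pair_union_pair hB₂
    (by rw [hB, pair_comm f₁]) he hf.symm he₁.1 he₂.1 hf₂.2
  have col₂ := hB₁.isBase_insert_diff_or_of_eq_diff_pair_union_pair hB₂ hB he hf he₁.1 he₂.1 hf₁.2
  -- Every row and every column of the 2 × 2 table of pivots `B₁ - eᵢ + fⱼ` contains a base,
  -- so one of its two diagonals consists of bases.
  tauto
end

section
/- Let M be a matroid on a finite ground set E with base family 𝓑. Then the adjacency family A(𝓑) satisfies the basis exchange property: for all U, V ∈ A(𝓑) and every b ∈ U \ V, there exists c ∈ V \ U such that (U \ {b}) ∪ {c} ∈ A(𝓑). -/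
/-- Two sets are *adjacent* if each has exactly one element outside the other. -/
def AdjacentSets {α : Type*} (B C : Set α) : Prop :=
  (B \ C).ncard = 1 ∧ (C \ B).ncard = 1

/-- The *adjacency family* of a family of sets: all unions of adjacent pairs of members. -/
def adjFam {α : Type*} (𝓕 : Set (Set α)) : Set (Set α) :=
  {U | ∃ B ∈ 𝓕, ∃ C ∈ 𝓕, AdjacentSets B C ∧ U = B ∪ C}

/-!
`A(𝓑)` consists exactly of the sets `B + x` with `B` a base and `x` a non-loop outside `B`:
completing `{x}` to a base inside `B + x` gives a base adjacent to `B`. If a base `B'` lies in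
`U ∈ A(𝓑)`, then `U - B'` is a single element, because bases have equally large differences;
hence `A(𝓑)` is an antichain.

Let `U = B₀ + u` and `b ∈ U \ V`. If `U - b` is a base, any `c ∈ V \ U` works. Otherwise
`b ∈ B₀` and `u ∈ cl(B₀ - b)`; this closure misses `b`, so it cannot contain the spanning set `V`.
Any `c ∈ V \ cl(B₀ - b)` makes `B₀ - b + c` a base, and `U - b + c` is that base plus `u`.
-/
open Set

namespace Matroid

variable {α : Type*} {M : Matroid α} {B B₀ U V : Set α} {b u x : α}

lemma insert_mem_adjFam_isBase (hB : M.IsBase B) (hxB : x ∉ B) (hx : M.IsNonloop x) :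
    insert x B ∈ adjFam {B | M.IsBase B} := by
  obtain ⟨B', hB', hxB', hB'B⟩ :=
    (indep_singleton.2 hx).exists_isBase_subset_union_isBase hB
  have hsdiff : B' \ B = {x} := by
    refine subset_antisymm (fun y ⟨hyB', hyB⟩ ↦ ?_) (singleton_subset_iff.2 ⟨hxB' rfl, hxB⟩)
    exact (hB'B hyB').resolve_right hyB
  refine ⟨B, hB, B', hB', ⟨?_, ?_⟩, ?_⟩
  · rw [hB.ncard_sdiff_comm hB', hsdiff, ncard_singleton]
  · rw [hsdiff, ncard_singleton]
  · rw [← union_sdiff_self, hsdiff, union_singleton]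

lemma mem_adjFam_isBase_iff :
    U ∈ adjFam {B | M.IsBase B} ↔
      ∃ B x, M.IsBase B ∧ x ∉ B ∧ M.IsNonloop x ∧ U = insert x B := by
  refine ⟨?_, fun ⟨B, x, hB, hxB, hx, hU⟩ ↦ hU ▸ insert_mem_adjFam_isBase hB hxB hx⟩
  rintro ⟨B, hB, C, hC, ⟨-, hCB⟩, rfl⟩
  obtain ⟨x, hx⟩ := ncard_eq_one.1 hCB
  have hxCB : x ∈ C \ B := hx ▸ rfl
  refine ⟨B, x, hB, hxCB.2, hC.indep.isNonloop_of_mem hxCB.1, ?_⟩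
  rw [← union_sdiff_self, hx, union_singleton]

lemma isNonloop_of_mem_adjFam_isBase (hU : U ∈ adjFam {B | M.IsBase B}) (hx : x ∈ U) :
    M.IsNonloop x := by
  obtain ⟨B, hB, C, hC, -, rfl⟩ := hU
  exact hx.elim hB.indep.isNonloop_of_mem hC.indep.isNonloop_of_mem

lemma spanning_of_mem_adjFam_isBase (hU : U ∈ adjFam {B | M.IsBase B}) : M.Spanning U := by
  obtain ⟨B, hB, C, hC, -, rfl⟩ := hU
  exact hB.spanning.superset subset_union_left (union_subset hB.subset_ground hC.subset_ground)

lemma exists_sdiff_eq_singleton_of_mem_adjFam_isBase (hU : U ∈ adjFam {B | M.IsBase B})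
    (hB : M.IsBase B) (hBU : B ⊆ U) : ∃ y, U \ B = {y} := by
  obtain ⟨B₀, u, hB₀, huB₀, -, rfl⟩ := mem_adjFam_isBase_iff.1 hU
  by_cases huB : u ∈ B
  · have hBB₀ : B \ B₀ = {u} :=
      subset_antisymm (fun y ⟨hyB, hyB₀⟩ ↦ (hBU hyB).resolve_right hyB₀)
        (singleton_subset_iff.2 ⟨huB, huB₀⟩)
    have hB₀B : (B₀ \ B).encard = 1 := by
      rw [hB₀.encard_sdiff_comm hB, hBB₀, encard_singleton]
    rw [insert_sdiff_of_mem _ huB]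
    exact encard_eq_one.1 hB₀B
  · obtain rfl : B = B₀ := hB.eq_of_subset_isBase hB₀ ((subset_insert_iff_of_notMem huB).1 hBU)
    exact ⟨u, insert_sdiff_eq_singleton huB₀⟩

lemma isAntichain_adjFam_isBase : IsAntichain (· ⊆ ·) (adjFam {B | M.IsBase B}) := by
  intro V hV U hU hne hVU
  obtain ⟨B, v, hB, hvB, -, rfl⟩ := mem_adjFam_isBase_iff.1 hV
  obtain ⟨y, hy⟩ := exists_sdiff_eq_singleton_of_mem_adjFam_isBase hU hB
    ((subset_insert v B).trans hVU)
  have hvy : v = y := by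
    have hv : v ∈ U \ B := ⟨hVU (mem_insert v B), hvB⟩
    rwa [hy] at hv
  apply hne
  rw [← union_sdiff_cancel ((subset_insert v B).trans hVU), hy, hvy, union_singleton]

lemma exists_insert_sdiff_mem_adjFam_of_not_isBase (hB₀ : M.IsBase B₀) (huB₀ : u ∉ B₀)
    (hu : M.IsNonloop u) (hV : M.Spanning V) (hbU : b ∈ insert u B₀) (hbV : b ∉ V)
    (hX : ¬ M.IsBase (insert u B₀ \ {b})) :
    ∃ c ∈ V \ insert u B₀, insert c (insert u B₀ \ {b}) ∈ adjFam {B | M.IsBase B} := by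
  have hbu : b ≠ u := by
    rintro rfl
    exact hX (by rwa [insert_sdiff_self_of_notMem huB₀])
  have hbB₀ : b ∈ B₀ := hbU.resolve_left hbu
  have hX_eq : insert u B₀ \ {b} = insert u (B₀ \ {b}) :=
    (insert_sdiff_singleton_comm hbu.symm B₀).symm
  have hu_cl : u ∈ M.closure (B₀ \ {b}) := by
    by_contra h
    exact hX (hX_eq ▸ hB₀.exchange_base_of_notMem_closure hbB₀ h)
  have hV_cl : ¬ V ⊆ M.closure (B₀ \ {b}) := by
    intro h
    have hbE : b ∈ M.closure V := hV.closure_eq ▸ hB₀.subset_ground hbB₀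
    exact hB₀.indep.notMem_closure_sdiff_of_mem hbB₀
      (M.closure_subset_closure_of_subset_closure h hbE)
  obtain ⟨c, hcV, hc⟩ := not_subset.1 hV_cl
  have hB' := hB₀.exchange_base_of_notMem_closure hbB₀ hc (hV.subset_ground hcV)
  have hcU : c ∉ insert u B₀ := by
    rintro (rfl | hcB₀)
    · exact hc hu_cl
    · have hcb : c ≠ b := fun h ↦ hbV (h ▸ hcV)
      exact hc (M.subset_closure _ (sdiff_subset.trans hB₀.subset_ground) ⟨hcB₀, hcb⟩)
  refine ⟨c, ⟨hcV, hcU⟩, ?_⟩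
  rw [hX_eq, insert_comm]
  exact insert_mem_adjFam_isBase hB'
    (fun h ↦ h.elim (fun huc ↦ hcU (huc ▸ mem_insert u B₀)) fun h ↦ huB₀ h.1) hu

end Matroid

open Matroid in
theorem adjFam_exchange_general {α : Type*} (M : Matroid α)
    (𝓑 : Set (Set α)) (h𝓑 : 𝓑 = {B | M.IsBase B}) :
    ∀ U ∈ adjFam 𝓑, ∀ V ∈ adjFam 𝓑, ∀ b ∈ U \ V,
      ∃ c ∈ V \ U, insert c (U \ {b}) ∈ adjFam 𝓑 := by
  subst h𝓑
  intro U hU V hV b ⟨hbU, hbV⟩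
  by_cases hX : M.IsBase (U \ {b})
  · have hVU : ¬ V ⊆ U := fun hVU ↦ hbV (isAntichain_adjFam_isBase.eq hV hU hVU ▸ hbU)
    obtain ⟨c, hcV, hcU⟩ := not_subset.1 hVU
    exact ⟨c, ⟨hcV, hcU⟩,
      insert_mem_adjFam_isBase hX (fun h ↦ hcU h.1) (isNonloop_of_mem_adjFam_isBase hV hcV)⟩
  · obtain ⟨B₀, u, hB₀, huB₀, hu, rfl⟩ := mem_adjFam_isBase_iff.1 hU
    exact exists_insert_sdiff_mem_adjFam_of_not_isBase hB₀ huB₀ hu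
      (spanning_of_mem_adjFam_isBase hV) hbU hbV hX

/-- Let `M` be a matroid on a finite ground set `E` with base family `𝓑`.
Then the adjacency family `A(𝓑)` satisfies the basis exchange property: for all
`U, V ∈ A(𝓑)` and every `b ∈ U \ V`, there is `c ∈ V \ U` with `(U \ {b}) ∪ {c} ∈ A(𝓑)`. -/
theorem adjFam_exchange {α : Type*} (M : Matroid α) (hfin : M.E.Finite)
    (𝓑 : Set (Set α)) (h𝓑 : 𝓑 = {B | M.IsBase B}) :
    ∀ U ∈ adjFam 𝓑, ∀ V ∈ adjFam 𝓑, ∀ b ∈ U \ V,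
      ∃ c ∈ V \ U, insert c (U \ {b}) ∈ adjFam 𝓑 :=
  adjFam_exchange_general M 𝓑 h𝓑
end

section
/- Let M be a matroid on a finite ground set E with base family 𝓑, and suppose M has at least one pair of adjacent bases. Then there exists a matroid M' on E whose family of bases is exactly the adjacency family A(𝓑). (In the language of ideals: the adjacency ideal of a matroidal ideal is again matroidal.) -/
/-!
The union of two adjacent bases `B`, `C` is `insert e B` for the nonloop `e` with `C \ B = {e}`,
and conversely every such `insert e B` is such a union, since `e` exchanges into `B`.
So `A(𝓑)` is the family of bases with one nonloop added. For its exchange property, remove `a`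
from `insert e B`: if what remains is a base, any new element of the other set may be added;
otherwise `a ∈ B`, and exchanging `a` out of `B` against a base inside the other set yields the
element to add.
-/

open Set

namespace Matroid

variable {α : Type*} {M : Matroid α} {X Y : Set α} {a : α}

def IsAugmentedBase (M : Matroid α) (X : Set α) : Prop :=
  ∃ B e, M.IsBase B ∧ e ∉ B ∧ M.IsNonloop e ∧ X = insert e B

lemma IsAugmentedBase.isNonloop_of_mem (hX : M.IsAugmentedBase X) (ha : a ∈ X) :
    M.IsNonloop a := by
  obtain ⟨B, e, hB, -, he, rfl⟩ := hX
  obtain rfl | haB := ha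
  · exact he
  · exact hB.indep.isNonloop_of_mem haB

lemma IsAugmentedBase.subset_ground (hX : M.IsAugmentedBase X) : X ⊆ M.E :=
  fun _ ha ↦ (hX.isNonloop_of_mem ha).mem_ground

lemma IsAugmentedBase.exists_isBase_subset (hX : M.IsAugmentedBase X) :
    ∃ B, M.IsBase B ∧ B ⊆ X := by
  obtain ⟨B, e, hB, -, -, rfl⟩ := hX
  exact ⟨B, hB, subset_insert e B⟩

lemma isAugmentedBase_iff_mem_adjFam :
    M.IsAugmentedBase X ↔ X ∈ adjFam {B | M.IsBase B} := by
  constructor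
  · rintro ⟨B, e, hB, heB, he, rfl⟩
    obtain ⟨C, hC, heC, hCB⟩ := he.indep.exists_isBase_subset_union_isBase hB
    have hCB : C \ B = {e} :=
      Subset.antisymm (fun x ⟨hxC, hxB⟩ ↦ (hCB hxC).resolve_right hxB)
        (singleton_subset_iff.2 ⟨heC rfl, heB⟩)
    have hCard : (C \ B).ncard = 1 := by rw [hCB, ncard_singleton]
    refine ⟨B, hB, C, hC, ⟨(hB.ncard_sdiff_comm hC).trans hCard, hCard⟩, ?_⟩
    rw [← union_sdiff_self, hCB, union_singleton]
  · rintro ⟨B, hB, C, hC, ⟨-, hCB⟩, rfl⟩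
    obtain ⟨e, he⟩ := ncard_eq_one.1 hCB
    have heCB : e ∈ C \ B := he ▸ rfl
    refine ⟨B, e, hB, heCB.2, hC.indep.isNonloop_of_mem heCB.1, ?_⟩
    rw [← union_sdiff_self, he, union_singleton]

lemma IsAugmentedBase.exchange_of_isBase_sdiff (hY : M.IsAugmentedBase Y) (haY : a ∉ Y)
    (hXa : M.IsBase (X \ {a})) : ∃ b ∈ Y \ X, M.IsAugmentedBase (insert b (X \ {a})) := by
  obtain ⟨b, hbY, hbX⟩ : (Y \ X).Nonempty := by
    obtain ⟨C, f, hC, hfC, -, rfl⟩ := hY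
    rw [nonempty_iff_ne_empty, Ne, sdiff_eq_empty]
    intro hYX
    have hYXa : insert f C ⊆ X \ {a} := subset_sdiff_singleton hYX haY
    have hCX : C = X \ {a} := hC.eq_of_subset_isBase hXa ((subset_insert f C).trans hYXa)
    exact hfC (hCX ▸ hYXa (mem_insert f C))
  exact ⟨b, ⟨hbY, hbX⟩, X \ {a}, b, hXa, fun h ↦ hbX h.1, hY.isNonloop_of_mem hbY, rfl⟩

lemma isAugmentedBase_exchangeProperty : ExchangeProperty M.IsAugmentedBase := by
  rintro X Y hX hY a ⟨haX, haY⟩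
  obtain ⟨B, e, hB, heB, he, rfl⟩ := hX
  obtain rfl | haB := haX
  · exact hY.exchange_of_isBase_sdiff haY (by rwa [insert_sdiff_self_of_notMem heB])
  have hae : e ≠ a := fun h ↦ heB (h ▸ haB)
  obtain ⟨C, hC, hCY⟩ := hY.exists_isBase_subset
  obtain ⟨b, ⟨hbC, hbB⟩, hB'⟩ := hB.exchange hC ⟨haB, fun h ↦ haY (hCY h)⟩
  by_cases hbX : b ∈ insert e B
  · obtain rfl : b = e := (mem_insert_iff.1 hbX).resolve_right hbB
    refine hY.exchange_of_isBase_sdiff haY ?_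
    rwa [← insert_sdiff_singleton_comm hae]
  refine ⟨b, ⟨hCY hbC, hbX⟩, _, e, hB', ?_, he, ?_⟩
  · rintro (rfl | ⟨heB', -⟩)
    exacts [hbX (mem_insert _ _), heB heB']
  · rw [← insert_sdiff_singleton_comm hae, insert_comm]

end Matroid

/-- Let `M` be a matroid on a finite ground set `E` with base family `𝓑`,
and suppose `M` has at least one pair of adjacent bases.  Then there is a matroid `M'` on
`E` whose family of bases is exactly the adjacency family `A(𝓑)`.  (In the language of
ideals: the adjacency ideal of a matroidal ideal is again matroidal.) -/
theorem adjFam_isBaseFamily {α : Type*} (M : Matroid α) (hfin : M.E.Finite)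
    (𝓑 : Set (Set α)) (h𝓑 : 𝓑 = {B | M.IsBase B})
    (hadj : ∃ B ∈ 𝓑, ∃ C ∈ 𝓑, AdjacentSets B C) :
    ∃ M' : Matroid α, M'.E = M.E ∧ {B | M'.IsBase B} = adjFam 𝓑 := by
  subst h𝓑
  obtain ⟨B, hB, C, hC, hBC⟩ := hadj
  have hBC : M.IsAugmentedBase (B ∪ C) :=
    Matroid.isAugmentedBase_iff_mem_adjFam.2 ⟨B, hB, C, hC, hBC, rfl⟩
  refine ⟨Matroid.ofIsBaseOfFinite hfin M.IsAugmentedBase ⟨_, hBC⟩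
    Matroid.isAugmentedBase_exchangeProperty fun _ ↦ Matroid.IsAugmentedBase.subset_ground,
    rfl, ?_⟩
  ext X
  exact Matroid.isAugmentedBase_iff_mem_adjFam
end

section
/- Let M be a matroid on {1, …, n} with base family 𝓑 and let k ≥ 1. If U = B ∪ E and V = C ∪ F belong to S_k(𝓑) (with B, C ∈ 𝓑, E ⊆ set(B), F ⊆ set(C), |E| = |F| = k) and U and V are adjacent, i.e., |U \ V| = |V \ U| = 1, then U ∪ V ∈ S_{k+1}(𝓑); that is, A(S_k(𝓑)) ⊆ S_{k+1}(𝓑). -/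
/-- For a family `𝓑` of subsets of `{1, …, n}` (ordered so that `i >_lex j ↔ i < j` as
integers) and `B ∈ 𝓑`, the set `set(B)` consists of all `e ∉ B` for which there exists
`t ∈ B` with `e >_lex t` (that is, `e < t`) and `(B \ {t}) ∪ {e} ∈ 𝓑`. -/
def lexSet {n : ℕ} (𝓑 : Set (Set (Fin n))) (B : Set (Fin n)) : Set (Fin n) :=
  {e | e ∉ B ∧ ∃ t ∈ B, e < t ∧ insert e (B \ {t}) ∈ 𝓑}

/-- `S_ℓ(𝓑) = { B ∪ E : B ∈ 𝓑, E ⊆ set(B), |E| = ℓ }`, the family of supports of the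
`ℓ`-th multigraded shifts of the matroidal ideal of `𝓑`. -/
def shiftFam {n : ℕ} (𝓑 : Set (Set (Fin n))) (ℓ : ℕ) : Set (Set (Fin n)) :=
  {U | ∃ B ∈ 𝓑, ∃ E, E ⊆ lexSet 𝓑 B ∧ E.ncard = ℓ ∧ U = B ∪ E}

/-!
A set `W` lies in `S_ℓ(𝓑)` iff it consists of non-loops, contains a base and has `r + ℓ`
elements. For the converse direction, take a base `B ⊆ W` maximising the sum of the indices of
its elements: every `e ∈ W \ B` is a non-loop, so it can be exchanged into `B` against some
`t ∈ B`, and maximality forces `e < t`, i.e. `e ∈ set(B)`. Adjacent `U, V ∈ S_k(𝓑)` have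
`|U ∪ V| = |U| + 1`, so `U ∪ V` meets the criterion with `ℓ = k + 1`.
-/

open Set

namespace Matroid

variable {α : Type*} {M : Matroid α} {B : Set α} {e : α}

theorem IsBase.exists_isBase_insert_sdiff_singleton (hB : M.IsBase B) (he : M.IsNonloop e)
    (heB : e ∉ B) : ∃ t ∈ B, M.IsBase (insert e (B \ {t})) := by
  obtain ⟨B', hB', heB', hB'B⟩ := he.indep.exists_isBase_subset_union_isBase hB
  have hB'_sdiff : B' \ B = {e} :=
    subset_antisymm (fun x hx ↦ (hB'B hx.1).resolve_right hx.2)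
      (singleton_subset_iff.2 ⟨heB' rfl, heB⟩)
  obtain ⟨t, ht⟩ : ∃ t, B \ B' = {t} := by
    rw [← encard_eq_one, hB.encard_sdiff_comm hB', hB'_sdiff, encard_singleton]
  obtain ⟨f, hf, rfl⟩ := hB.eq_exchange_of_sdiff_eq_singleton hB' ht
  obtain rfl : f = e := by rwa [hB'_sdiff] at hf
  have htB : t ∈ B := (ht.symm.subset rfl).1
  refine ⟨t, htB, ?_⟩
  rwa [insert_sdiff_singleton_comm (ne_of_mem_of_not_mem htB heB).symm]

end Matroid

theorem finsum_mem_insert_sdiff_singleton_add {α R : Type*} [AddCommMonoid R] (f : α → R)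
    {s : Set α} {a b : α} (hs : s.Finite) (ha : a ∈ s) (hb : b ∉ s) :
    ∑ᶠ x ∈ insert b (s \ {a}), f x + f a = ∑ᶠ x ∈ s, f x + f b := by
  conv_rhs => rw [← insert_eq_of_mem ha, ← insert_sdiff_singleton]
  rw [finsum_mem_insert f (fun h ↦ hb h.1) hs.sdiff,
    finsum_mem_insert f (fun h : a ∈ s \ {a} ↦ h.2 rfl) hs.sdiff]
  abel

theorem AdjacentSets.ncard_union {α : Type*} {U V : Set α} (hUV : AdjacentSets U V)
    (hU : U.Finite) : (U ∪ V).ncard = U.ncard + 1 := by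
  rw [← union_sdiff_self, ncard_union_eq disjoint_sdiff_right hU
    (finite_of_ncard_ne_zero (by rw [hUV.2]; exact one_ne_zero)), hUV.2]

section shiftFam

variable {n : ℕ} {M : Matroid (Fin n)}

noncomputable def indexSum (S : Set (Fin n)) : ℕ :=
  ∑ᶠ x ∈ S, (x : ℕ)

theorem isNonloop_of_mem_lexSet {B : Set (Fin n)} {e : Fin n}
    (he : e ∈ lexSet {B | M.IsBase B} B) : M.IsNonloop e := by
  obtain ⟨-, t, -, -, hbase⟩ := he
  exact hbase.indep.isNonloop_of_mem (mem_insert e _)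

theorem sdiff_subset_lexSet_of_maximalFor {W B : Set (Fin n)} (hW : ∀ e ∈ W, M.IsNonloop e)
    (hB : MaximalFor (fun B ↦ M.IsBase B ∧ B ⊆ W) indexSum B) :
    W \ B ⊆ lexSet {B | M.IsBase B} B := by
  obtain ⟨⟨hBbase, hBW⟩, hBmax⟩ := hB
  rintro e ⟨heW, heB⟩
  obtain ⟨t, htB, hexch⟩ := hBbase.exists_isBase_insert_sdiff_singleton (hW e heW) heB
  refine ⟨heB, t, htB, ?_, hexch⟩
  have hsum : indexSum (insert e (B \ {t})) + t = indexSum B + e :=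
    finsum_mem_insert_sdiff_singleton_add _ B.toFinite htB heB
  refine (ne_of_mem_of_not_mem htB heB).symm.lt_of_le (not_lt.1 fun hte ↦ ?_)
  have hte : (t : ℕ) < e := hte
  have := hBmax ⟨hexch, insert_subset heW (sdiff_subset.trans hBW)⟩ (by omega)
  omega

theorem mem_shiftFam_iff {U : Set (Fin n)} {ℓ : ℕ} :
    U ∈ shiftFam {B | M.IsBase B} ℓ ↔
      (∀ e ∈ U, M.IsNonloop e) ∧ ∃ B, M.IsBase B ∧ B ⊆ U ∧ U.ncard = B.ncard + ℓ := by
  constructor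
  · rintro ⟨B, hB, E, hE, rfl, rfl⟩
    refine ⟨?_, B, hB, subset_union_left, ncard_union_eq ?_⟩
    · rintro e (he | he)
      exacts [hB.indep.isNonloop_of_mem he, isNonloop_of_mem_lexSet (hE he)]
    · exact disjoint_left.2 fun e heB heE ↦ (hE heE).1 heB
  · rintro ⟨hU, B, hB, hBU, hcard⟩
    obtain ⟨B', ⟨hB', hB'U⟩, hB'max⟩ :=
      (toFinite {B | M.IsBase B ∧ B ⊆ U}).exists_maximalFor indexSum _ ⟨B, hB, hBU⟩
    refine ⟨B', hB', U \ B', sdiff_subset_lexSet_of_maximalFor hU ⟨⟨hB', hB'U⟩, hB'max⟩, ?_,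
      (union_sdiff_cancel hB'U).symm⟩
    rw [ncard_sdiff hB'U, hcard, hB'.ncard_eq_ncard_of_isBase hB]
    omega

end shiftFam

theorem adjFam_shiftFam_subset_shiftFam_succ_general {n : ℕ} (M : Matroid (Fin n))
    (𝓑 : Set (Set (Fin n))) (h𝓑 : 𝓑 = {B | M.IsBase B})
    (k : ℕ) :
    (∀ U ∈ shiftFam 𝓑 k, ∀ V ∈ shiftFam 𝓑 k, AdjacentSets U V →
      U ∪ V ∈ shiftFam 𝓑 (k + 1)) ∧
    adjFam (shiftFam 𝓑 k) ⊆ shiftFam 𝓑 (k + 1) := by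
  subst h𝓑
  have union_mem : ∀ U ∈ shiftFam {B | M.IsBase B} k, ∀ V ∈ shiftFam {B | M.IsBase B} k,
      AdjacentSets U V → U ∪ V ∈ shiftFam {B | M.IsBase B} (k + 1) := by
    intro U hU V hV hUV
    obtain ⟨hU, B, hB, hBU, hcard⟩ := mem_shiftFam_iff.1 hU
    obtain ⟨hV, -⟩ := mem_shiftFam_iff.1 hV
    refine mem_shiftFam_iff.2 ⟨fun e he ↦ he.elim (hU e) (hV e), B, hB,
      hBU.trans subset_union_left, ?_⟩
    rw [hUV.ncard_union U.toFinite, hcard, add_assoc]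
  exact ⟨union_mem, by rintro _ ⟨U, hU, V, hV, hUV, rfl⟩; exact union_mem U hU V hV hUV⟩

/-- Let `M` be a matroid on `{1, …, n}` with base family `𝓑` and let
`k ≥ 1`.  If `U = B ∪ E` and `V = C ∪ F` belong to `S_k(𝓑)` and `U`, `V` are adjacent,
i.e. `|U \ V| = |V \ U| = 1`, then `U ∪ V ∈ S_{k+1}(𝓑)`; that is,
`A(S_k(𝓑)) ⊆ S_{k+1}(𝓑)`. -/
theorem adjFam_shiftFam_subset_shiftFam_succ {n : ℕ} (M : Matroid (Fin n))
    (hE : M.E = Set.univ) (𝓑 : Set (Set (Fin n))) (h𝓑 : 𝓑 = {B | M.IsBase B})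
    (k : ℕ) (hk : 1 ≤ k) :
    (∀ U ∈ shiftFam 𝓑 k, ∀ V ∈ shiftFam 𝓑 k, AdjacentSets U V →
      U ∪ V ∈ shiftFam 𝓑 (k + 1)) ∧
    adjFam (shiftFam 𝓑 k) ⊆ shiftFam 𝓑 (k + 1) :=
  adjFam_shiftFam_subset_shiftFam_succ_general M 𝓑 h𝓑 k
end

section
/- Let M be a matroid on {1, …, n} with base family 𝓑, let B ∈ 𝓑, and let v ∉ B. Suppose there exists b ∈ B with B' := (B \ {b}) ∪ {v} ∈ 𝓑, and suppose that every t ∈ B with (B \ {t}) ∪ {v} ∈ 𝓑 satisfies t >_lex v (i.e., t < v as integers). Then b ∈ set(B') and set(B) ⊆ set(B'). -/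
/-!
Let `e ∈ set(B)` be witnessed by the base `C = (B \ {t}) ∪ {e}` with `e < t`. If
`(B \ {t}) ∪ {v}` is a base, then `t < v`, so every element of `B' \ C ⊆ {v, t}` exceeds `e`,
and the dual exchange of `e` into `B'` against `C` witnesses `e ∈ set(B')`. Otherwise the dual
exchange of `v` into `C` against `B'` cannot remove `e` (that would give `(B \ {t}) ∪ {v}`),
so it removes `b`, and the resulting base is `(B' \ {t}) ∪ {e}`.
-/

namespace Matroid

variable {α : Type*} {M : Matroid α} {B₁ B₂ : Set α} {e : α}

theorem IsBase.rev_exchange (hB₁ : M.IsBase B₁) (hB₂ : M.IsBase B₂) (he : e ∈ B₂ \ B₁) :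
    ∃ f ∈ B₁ \ B₂, M.IsBase (insert e (B₁ \ {f})) := by
  have heE : e ∈ M.E := hB₂.subset_ground he.1
  obtain ⟨f, ⟨⟨hfE, hfB₂⟩, hfB₁⟩, hbase⟩ := hB₁.compl_isBase_dual.exchange
    hB₂.compl_isBase_dual ⟨⟨heE, he.2⟩, fun h ↦ h.2 he.1⟩
  have hfB₁ : f ∈ B₁ := by_contra fun h ↦ hfB₁ ⟨hfE, h⟩
  refine ⟨f, ⟨hfB₁, hfB₂⟩, ?_⟩
  convert hbase.compl_isBase_of_dual using 1
  have hB₁E := hB₁.subset_ground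
  ext x
  simp only [Set.mem_insert_iff, Set.mem_sdiff, Set.mem_singleton_iff]
  grind

end Matroid

open Matroid Set

section

variable {n : ℕ} {M : Matroid (Fin n)} {B B' C : Set (Fin n)} {b e v : Fin n}

lemma mem_lexSet_insert_sdiff (hB : M.IsBase B) (hv : v ∉ B) (hb : b ∈ B) (hbv : b < v) :
    b ∈ lexSet {B | M.IsBase B} (insert v (B \ {b})) := by
  refine ⟨by simp [hbv.ne], v, mem_insert _ _, hbv, ?_⟩
  rwa [insert_sdiff_self_of_notMem (fun h ↦ hv h.1), insert_sdiff_singleton,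
    insert_eq_of_mem hb]

lemma mem_lexSet_of_forall_sdiff_lt (hB' : M.IsBase B') (hC : M.IsBase C) (he : e ∈ C \ B')
    (hlt : ∀ s ∈ B' \ C, e < s) : e ∈ lexSet {B | M.IsBase B} B' := by
  obtain ⟨s, hs, hbase⟩ := hB'.rev_exchange hC he
  exact ⟨he.2, s, hs.1, hlt s hs, hbase⟩

lemma lexSet_subset_lexSet_insert_sdiff (hv : v ∉ B)
    (hB' : M.IsBase (insert v (B \ {b})))
    (hmin : ∀ t ∈ B, M.IsBase (insert v (B \ {t})) → t < v) :
    lexSet {B | M.IsBase B} B ⊆ lexSet {B | M.IsBase B} (insert v (B \ {b})) := by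
  rintro e ⟨heB, t, htB, het, hC⟩
  have hev : e ≠ v := by
    rintro rfl
    exact (hmin t htB hC).not_gt het
  have heB' : e ∉ insert v (B \ {b}) := by simp [hev, heB]
  by_cases hvt : M.IsBase (insert v (B \ {t}))
  · refine mem_lexSet_of_forall_sdiff_lt hB' hC ⟨mem_insert _ _, heB'⟩ ?_
    rintro s ⟨hsB', hsC⟩
    obtain rfl | rfl : s = v ∨ s = t := by
      simp only [mem_insert_iff, mem_sdiff, mem_singleton_iff] at hsB' hsC
      tauto
    · exact het.trans (hmin t htB hvt)
    · exact het
  · have hvC : v ∉ insert e (B \ {t}) := by simp [hev.symm, hv]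
    obtain ⟨s, ⟨hsC, hsB'⟩, hbase⟩ := hC.rev_exchange hB' ⟨mem_insert _ _, hvC⟩
    rcases hsC with rfl | ⟨hsB, hst⟩
    · rw [insert_sdiff_self_of_notMem (fun h ↦ heB h.1)] at hbase
      exact absurd hbase hvt
    obtain rfl : b = s :=
      by_contra fun hbs ↦ hsB' (mem_insert_of_mem _ ⟨hsB, fun h ↦ hbs h.symm⟩)
    have htb : t ≠ b := by
      rintro rfl
      exact hvt hB'
    have heb : e ≠ b := by
      rintro rfl
      exact heB hsB
    have hvt' : v ≠ t := by
      rintro rfl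
      exact hv htB
    refine ⟨heB', t, mem_insert_of_mem _ ⟨htB, htb⟩, het, ?_⟩
    rw [← insert_sdiff_singleton_comm heb, Set.sdiff_sdiff_comm, insert_comm] at hbase
    rwa [← insert_sdiff_singleton_comm hvt']

end

theorem lexSet_subset_of_pivot_general {n : ℕ} (M : Matroid (Fin n))
    (𝓑 : Set (Set (Fin n))) (h𝓑 : 𝓑 = {B | M.IsBase B})
    (B : Set (Fin n)) (hB : B ∈ 𝓑) (v : Fin n) (hv : v ∉ B)
    (b : Fin n) (hb : b ∈ B) (B' : Set (Fin n)) (hB'def : B' = insert v (B \ {b}))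
    (hB' : B' ∈ 𝓑)
    (hmin : ∀ t ∈ B, insert v (B \ {t}) ∈ 𝓑 → t < v) :
    b ∈ lexSet 𝓑 B' ∧ lexSet 𝓑 B ⊆ lexSet 𝓑 B' := by
  subst h𝓑 hB'def
  exact ⟨mem_lexSet_insert_sdiff hB hv hb (hmin b hb hB'),
    lexSet_subset_lexSet_insert_sdiff hv hB' hmin⟩

/-- Let `M` be a matroid on `{1, …, n}` with base family `𝓑`, let
`B ∈ 𝓑`, and let `v ∉ B`.  Suppose there exists `b ∈ B` with
`B' := (B \ {b}) ∪ {v} ∈ 𝓑`, and suppose that every `t ∈ B` with `(B \ {t}) ∪ {v} ∈ 𝓑`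
satisfies `t >_lex v` (i.e. `t < v` as integers).  Then `b ∈ set(B')` and
`set(B) ⊆ set(B')`. -/
theorem lexSet_subset_of_pivot {n : ℕ} (M : Matroid (Fin n))
    (hE : M.E = Set.univ) (𝓑 : Set (Set (Fin n))) (h𝓑 : 𝓑 = {B | M.IsBase B})
    (B : Set (Fin n)) (hB : B ∈ 𝓑) (v : Fin n) (hv : v ∉ B)
    (b : Fin n) (hb : b ∈ B) (B' : Set (Fin n)) (hB'def : B' = insert v (B \ {b}))
    (hB' : B' ∈ 𝓑)
    (hmin : ∀ t ∈ B, insert v (B \ {t}) ∈ 𝓑 → t < v) :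
    b ∈ lexSet 𝓑 B' ∧ lexSet 𝓑 B ⊆ lexSet 𝓑 B' :=
  lexSet_subset_of_pivot_general M 𝓑 h𝓑 B hB v hv b hb B' hB'def hB' hmin
end

section
/- Let k be a field and S = k[x₁, …, xₙ]. Let M be a matroid on {1, …, n} with base family 𝓑 having at least one pair of adjacent bases, and let I ⊆ S be the matroidal ideal generated by the squarefree monomials x_B = ∏_{i ∈ B} x_i for B ∈ 𝓑. Then the adjacency ideal A(I), generated by the least common multiples lcm(x_B, x_C) over all adjacent pairs B, C ∈ 𝓑, is again a matroidal ideal: there exists a matroid M' on {1, …, n} with base family 𝓑' such that A(I) is the ideal generated by { x_D : D ∈ 𝓑' }. -/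
/-- The squarefree monomial `x_B = ∏_{i ∈ B} x_i` in `k[x₁, …, xₙ]` associated to a
subset `B ⊆ {1, …, n}`. -/
noncomputable def baseMonomial (k : Type*) [CommSemiring k] {n : ℕ} (B : Set (Fin n)) :
    MvPolynomial (Fin n) k :=
  ∏ i ∈ B.toFinite.toFinset, MvPolynomial.X i

/-!
Unions `B ∪ C` of adjacent bases are exactly the spanning sets of nonloops of size `r + 1`: such
a `D` contains a base `B` missing one element `c` of `D`, and any base of `D` through the nonloop
`c` is adjacent to `B`. These sets satisfy basis exchange because spanning sets do: for
`e ∈ S₁ \ S₂`, either `S₁ - e` still spans, or some `f ∈ S₂` lies outside `cl(S₁ - e)` and then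
exchanges with `e`. So they are the bases of a matroid, whose ideal is `A(I)`.
-/

open Set

namespace Matroid

variable {α : Type*} {M : Matroid α} {S₁ S₂ D : Set α} {e : α}

lemma Spanning.exists_insert_sdiff_singleton_spanning (h₁ : M.Spanning S₁)
    (h₂ : M.Spanning S₂) (hS : ¬ S₂ ⊆ S₁) (he : e ∉ S₂) :
    ∃ f ∈ S₂ \ S₁, M.Spanning (insert f (S₁ \ {e})) := by
  by_cases hsp : M.Spanning (S₁ \ {e})
  · obtain ⟨f, hf₂, hf₁⟩ := not_subset.1 hS
    exact ⟨f, ⟨hf₂, hf₁⟩, hsp.superset (subset_insert _ _)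
      (insert_subset (h₂.subset_ground hf₂) (sdiff_subset.trans h₁.subset_ground))⟩
  obtain ⟨f, hf₂, hfcl⟩ : ∃ f ∈ S₂, f ∉ M.closure (S₁ \ {e}) := by
    by_contra! h
    refine hsp ((spanning_iff_ground_subset_closure (sdiff_subset.trans h₁.subset_ground)).2 ?_)
    rw [← h₂.closure_eq]
    exact M.closure_subset_closure_of_subset_closure h
  have hf₁ : f ∉ S₁ := fun hf ↦
    hfcl (M.mem_closure_of_mem' ⟨hf, ne_of_mem_of_not_mem hf₂ he⟩ (h₂.subset_ground hf₂))
  have hecl : e ∈ M.closure (insert f (S₁ \ {e})) := by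
    refine (closure_exchange ⟨?_, hfcl⟩).1
    rw [insert_sdiff_singleton, h₁.closure_eq_of_superset (subset_insert _ _)]
    exact h₂.subset_ground hf₂
  refine ⟨f, ⟨hf₂, hf₁⟩, (closure_spanning_iff ?_).1 (h₁.superset ?_)⟩
  · exact insert_subset (h₂.subset_ground hf₂) (sdiff_subset.trans h₁.subset_ground)
  · intro x hx
    obtain rfl | hxe := eq_or_ne x e
    · exact hecl
    · exact M.mem_closure_of_mem' (mem_insert_of_mem _ ⟨hx, hxe⟩) (h₁.subset_ground hx)

def IsAdjacentBasesUnion (M : Matroid α) (D : Set α) : Prop :=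
  ∃ B C, M.IsBase B ∧ M.IsBase C ∧ AdjacentSets B C ∧ D = B ∪ C

lemma isAdjacentBasesUnion_iff [M.RankFinite] :
    M.IsAdjacentBasesUnion D ↔
      M.Spanning D ∧ D.encard = M.eRank + 1 ∧ ∀ x ∈ D, M.IsNonloop x := by
  constructor
  · rintro ⟨B, C, hB, hC, ⟨-, hCB⟩, rfl⟩
    obtain ⟨c, hc⟩ := ncard_eq_one.1 hCB
    have hcB : c ∉ B := (hc.symm.subset (mem_singleton c)).2
    have hBC : B ∪ C = insert c B := by
      rw [← union_sdiff_self, hc, union_singleton]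
    refine ⟨hB.spanning.superset subset_union_left
      (union_subset hB.subset_ground hC.subset_ground), ?_, ?_⟩
    · rw [hBC, encard_insert_of_notMem hcB, hB.encard_eq_eRank]
    · rintro x (hx | hx)
      exacts [hB.indep.isNonloop_of_mem hx, hC.indep.isNonloop_of_mem hx]
  · rintro ⟨hD, hcard, hnl⟩
    obtain ⟨B, hB, hBD⟩ := hD.exists_isBase_subset
    have hDB : (D \ B).encard = 1 := by
      have := encard_sdiff_add_encard_of_subset hBD
      rw [hcard, ← hB.encard_eq_eRank, add_comm B.encard] at this
      exact WithTop.add_right_cancel (encard_ne_top_iff.2 hB.finite) this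
    obtain ⟨c, hc⟩ := encard_eq_one.1 hDB
    have hcD : c ∈ D \ B := hc.symm.subset (mem_singleton c)
    obtain ⟨C, hC, hcC, hCD⟩ :=
      (hnl c hcD.1).indep.exists_isBase_subset_spanning hD (singleton_subset_iff.2 hcD.1)
    have hCB : C \ B = {c} :=
      (hc ▸ sdiff_subset_sdiff_left hCD).antisymm
        (singleton_subset_iff.2 ⟨singleton_subset_iff.1 hcC, hcD.2⟩)
    have hCB₁ : (C \ B).ncard = 1 := by rw [hCB, ncard_singleton]
    refine ⟨B, C, hB, hC, ⟨(hB.ncard_sdiff_comm hC).trans hCB₁, hCB₁⟩, ?_⟩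
    apply (union_subset hBD hCD).antisymm'
    rw [← union_sdiff_cancel hBD, hc, ← hCB]
    exact union_subset_union_right _ sdiff_subset

lemma exchangeProperty_isAdjacentBasesUnion [M.RankFinite] :
    ExchangeProperty M.IsAdjacentBasesUnion := by
  intro D₁ D₂ h₁ h₂ e he
  rw [isAdjacentBasesUnion_iff] at h₁ h₂
  obtain ⟨hD₁, hcard₁, hnl₁⟩ := h₁
  obtain ⟨hD₂, hcard₂, hnl₂⟩ := h₂
  have hD₂D₁ : ¬ D₂ ⊆ D₁ := fun hsub ↦ by
    have hfin : D₁.Finite := encard_ne_top_iff.1 <| by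
      rw [hcard₁]; exact WithTop.add_ne_top.2 ⟨M.eRank_ne_top_iff.2 ‹_›, ENat.one_ne_top⟩
    exact he.2 ((hfin.eq_of_subset_of_encard_le' hsub (hcard₁.trans hcard₂.symm).le) ▸ he.1)
  obtain ⟨f, hf, hspan⟩ := hD₁.exists_insert_sdiff_singleton_spanning hD₂ hD₂D₁ he.2
  refine ⟨f, hf, (isAdjacentBasesUnion_iff).2 ⟨hspan, ?_, ?_⟩⟩
  · rw [encard_insert_of_notMem (fun h ↦ hf.2 h.1), encard_sdiff_singleton_add_one he.1, hcard₁]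
  · rintro x (rfl | hx)
    exacts [hnl₂ x hf.1, hnl₁ x hx.1]

lemma IsAdjacentBasesUnion.subset_ground [M.RankFinite] (hD : M.IsAdjacentBasesUnion D) :
    D ⊆ M.E :=
  (isAdjacentBasesUnion_iff.1 hD).1.subset_ground

noncomputable def adjacencyMatroid (M : Matroid α) [M.Finite]
    (h : ∃ D, M.IsAdjacentBasesUnion D) : Matroid α :=
  Matroid.ofIsBaseOfFinite M.ground_finite M.IsAdjacentBasesUnion h
    exchangeProperty_isAdjacentBasesUnion fun _ ↦ IsAdjacentBasesUnion.subset_ground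

@[simp] lemma adjacencyMatroid_isBase [M.Finite] (h : ∃ D, M.IsAdjacentBasesUnion D) :
    (M.adjacencyMatroid h).IsBase = M.IsAdjacentBasesUnion := rfl

end Matroid

theorem adjacency_ideal_matroidal_general (k : Type*) [Field k] {n : ℕ}
    (M : Matroid (Fin n)) (hE : M.E = Set.univ)
    (𝓑 : Set (Set (Fin n))) (h𝓑 : 𝓑 = {B | M.IsBase B})
    (hadj : ∃ B ∈ 𝓑, ∃ C ∈ 𝓑, AdjacentSets B C)
    (A : Ideal (MvPolynomial (Fin n) k))
    (hA : A = Ideal.span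
      {p | ∃ B ∈ 𝓑, ∃ C ∈ 𝓑, AdjacentSets B C ∧ p = baseMonomial k (B ∪ C)}) :
    ∃ M' : Matroid (Fin n), M'.E = Set.univ ∧
      A = Ideal.span {p | ∃ D ∈ {B | M'.IsBase B}, p = baseMonomial k D} := by
  subst h𝓑 hA
  obtain ⟨B, hB, C, hC, hBC⟩ := hadj
  refine ⟨M.adjacencyMatroid ⟨B ∪ C, B, C, hB, hC, hBC, rfl⟩, hE, ?_⟩
  congr 1
  ext p
  simp only [mem_ofPred_eq, Matroid.adjacencyMatroid_isBase, Matroid.IsAdjacentBasesUnion]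
  constructor
  · rintro ⟨B, hB, C, hC, hBC, rfl⟩
    exact ⟨B ∪ C, ⟨B, C, hB, hC, hBC, rfl⟩, rfl⟩
  · rintro ⟨-, ⟨B, C, hB, hC, hBC, rfl⟩, rfl⟩
    exact ⟨B, hB, C, hC, hBC, rfl⟩

/-- Let `k` be a field and `S = k[x₁, …, xₙ]`.  Let `M` be a matroid on
`{1, …, n}` with base family `𝓑` having at least one pair of adjacent bases, and let
`I ⊆ S` be the matroidal ideal generated by the squarefree monomials `x_B`, `B ∈ 𝓑`.
Then the adjacency ideal `A(I)`, generated by the least common multiples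
`lcm(x_B, x_C) = x_{B ∪ C}` over all adjacent pairs `B, C ∈ 𝓑`, is again a matroidal
ideal: there is a matroid `M'` on `{1, …, n}` with base family `𝓑'` such that `A(I)` is
the ideal generated by `{ x_D : D ∈ 𝓑' }`. -/
theorem adjacency_ideal_matroidal (k : Type*) [Field k] {n : ℕ}
    (M : Matroid (Fin n)) (hE : M.E = Set.univ)
    (𝓑 : Set (Set (Fin n))) (h𝓑 : 𝓑 = {B | M.IsBase B})
    (hadj : ∃ B ∈ 𝓑, ∃ C ∈ 𝓑, AdjacentSets B C)
    (I : Ideal (MvPolynomial (Fin n) k))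
    (hI : I = Ideal.span {p | ∃ B ∈ 𝓑, p = baseMonomial k B})
    (A : Ideal (MvPolynomial (Fin n) k))
    (hA : A = Ideal.span
      {p | ∃ B ∈ 𝓑, ∃ C ∈ 𝓑, AdjacentSets B C ∧ p = baseMonomial k (B ∪ C)}) :
    ∃ M' : Matroid (Fin n), M'.E = Set.univ ∧
      A = Ideal.span {p | ∃ D ∈ {B | M'.IsBase B}, p = baseMonomial k D} :=
  adjacency_ideal_matroidal_general k M hE 𝓑 h𝓑 hadj A hA
end
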